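/- Let Φ' be the two-group (interchangeable-robot) version of the MPP instance reduced from a 3SAT instance (X, C) with n variables and m clauses (as described in the context). In any solution of Φ' with makespan m+2, and likewise in any solution of Φ' with total arrival time (n+m)(m+2), the clause robot starting at v_{c_j} ends at the goal vertex v_{c_j}^g for every 1 ≤ j ≤ m, and each such robot takes exactly m+2 time steps to reach v_{c_j}^g; in particular, minimum-time solutions of the two-group instance induce the same robot-to-goal correspondence as in the fully labeled instance. -/

import Mathlib

/-!
Formalization of multi-robot path planning on graphs (MPP).

An MPP instance consists of a connected simple graph `G` on a vertex type `V`,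
a finite set of robots (an index type `R`), and injective start/goal
configurations `xI xG : R → V`.  A scheduled path is a map `ℕ → V`.
-/

namespace MPPFormal

variable {V R : Type}

/-- The arrival time of a path `p` with goal `g`: the smallest time `t`
with `p t = g`. -/
noncomputable def arrivalTime (g : V) (p : ℕ → V) : ℕ := sInf {t | p t = g}

/-- A feasible scheduled path from `s` to `g` in the graph `G`:
it starts at `s`, reaches `g` at some time, stays at `g` forever after the
first time it reaches `g`, and at every time step it either traverses an
edge of `G` or stays put. -/
def FeasiblePath (G : SimpleGraph V) (s g : V) (p : ℕ → V) : Prop :=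
  p 0 = s ∧ (∃ t, p t = g) ∧ (∀ t, arrivalTime g p ≤ t → p t = g) ∧
    ∀ t, G.Adj (p t) (p (t + 1)) ∨ p t = p (t + 1)

/-- Two scheduled paths collide if they meet at the same vertex at the same
time, or if they swap along an edge head-on. -/
def Collide (p q : ℕ → V) : Prop :=
  (∃ t, p t = q t) ∨ ∃ t, p t = q (t + 1) ∧ p (t + 1) = q t ∧ p t ≠ p (t + 1)

/-- The length of a scheduled path: the number of time steps at which it
actually moves. -/
noncomputable def pathLen (p : ℕ → V) : ℕ := Set.ncard {t | p t ≠ p (t + 1)}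

/-- A solution to the MPP instance `(G, R, xI, xG)`: a family of pairwise
non-colliding feasible paths, one per robot. -/
def IsSolution (G : SimpleGraph V) (xI xG : R → V) (p : R → ℕ → V) : Prop :=
  (∀ i, FeasiblePath G (xI i) (xG i) (p i)) ∧
    Pairwise fun i j => ¬ Collide (p i) (p j)

/-- `(G, xI, xG)` together with the robot index type `R` forms an MPP
instance: the graph is connected and the start and goal configurations are
injective. -/
def IsMPPInstance (G : SimpleGraph V) (xI xG : R → V) : Prop :=
  G.Connected ∧ Function.Injective xI ∧ Function.Injective xG

variable [Fintype R]

/-- Total arrival time of a solution. -/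
noncomputable def totalTime (xG : R → V) (p : R → ℕ → V) : ℕ :=
  ∑ i, arrivalTime (xG i) (p i)

/-- Makespan (last arrival time) of a solution. -/
noncomputable def makespan (xG : R → V) (p : R → ℕ → V) : ℕ :=
  Finset.univ.sup fun i => arrivalTime (xG i) (p i)

/-- Total distance traveled in a solution. -/
noncomputable def totalDist (p : R → ℕ → V) : ℕ := ∑ i, pathLen (p i)

/-- Maximum single-robot distance of a solution. -/
noncomputable def maxDist (p : R → ℕ → V) : ℕ :=
  Finset.univ.sup fun i => pathLen (p i)

/-- Minimum total arrival time over all solutions. -/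
noncomputable def minTotalTime (G : SimpleGraph V) (xI xG : R → V) : ℕ :=
  sInf {c | ∃ p, IsSolution G xI xG p ∧ totalTime xG p = c}

/-- Minimum makespan over all solutions. -/
noncomputable def minMakespan (G : SimpleGraph V) (xI xG : R → V) : ℕ :=
  sInf {c | ∃ p, IsSolution G xI xG p ∧ makespan xG p = c}

/-- Minimum total distance over all solutions. -/
noncomputable def minTotalDist (G : SimpleGraph V) (xI xG : R → V) : ℕ :=
  sInf {c | ∃ p, IsSolution G xI xG p ∧ totalDist p = c}

/-- Minimum maximum distance over all solutions. -/
noncomputable def minMaxDist (G : SimpleGraph V) (xI xG : R → V) : ℕ :=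
  sInf {c | ∃ p, IsSolution G xI xG p ∧ maxDist p = c}

end MPPFormal

/-!
The reduction from 3SAT to MPP.

A 3SAT instance over `n` variables with `m` clauses assigns to each clause
`j : Fin m` three literals; a literal is a pair `(i, b) : Fin n × Bool`,
`b = true` meaning the non-negated variable `x_i` and `b = false` the
negated literal `¬ x_i`.  The three literals of each clause involve three
distinct variables.
-/

namespace MPPFormal

/-- A 3SAT instance with variables `x_1, …, x_n` and clauses `c_1, …, c_m`. -/
structure ThreeSat (n m : ℕ) where
  lit : Fin m → Fin 3 → Fin n × Bool
  distinctVars : ∀ j (k k' : Fin 3), k ≠ k' → (lit j k).1 ≠ (lit j k').1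

/-- An assignment `a` satisfies the instance if every clause contains a true
literal. -/
def ThreeSat.SatisfiedBy {n m : ℕ} (sat : ThreeSat n m) (a : Fin n → Bool) : Prop :=
  ∀ j, ∃ k, a (sat.lit j k).1 = (sat.lit j k).2

/-- Satisfiability of a 3SAT instance. -/
def ThreeSat.Satisfiable {n m : ℕ} (sat : ThreeSat n m) : Prop :=
  ∃ a, sat.SatisfiedBy a

/-- Vertices of the MPP instance `Φ` reduced from a 3SAT instance with `n`
variables and `m` clauses:
* `vx i` is the left endpoint `v_{x_i}` of the `i`-th variable strip (start of
  the variable robot `r_{x_i}`);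
* `vxg i` is the right endpoint `v_{x_i}^g` (goal of `r_{x_i}`);
* `mid i side k` is the interior vertex of the `i`-th upper (`side = true`)
  or lower (`side = false`) path lying at distance `k + 1` from `vx i`
  (each of the two paths has length `m + 2`, hence `m + 1` interior
  vertices, `k : Fin (m+1)`);
* `vc j` is the start vertex `v_{c_j}` of the clause robot `r_{c_j}`;
* `vcg j` is its goal vertex `v_{c_j}^g`. -/
inductive PhiV (n m : ℕ) where
  | vx (i : Fin n)
  | vxg (i : Fin n)
  | mid (i : Fin n) (side : Bool) (k : Fin (m + 1))
  | vc (j : Fin m)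
  | vcg (j : Fin m)
deriving DecidableEq

/-- Base relation generating the edges of `Φ`:
the two length-`(m+2)` paths of each variable strip; an edge from `v_{c_j}`
to the vertex at distance `j + 1` (`1`-indexed: distance `j`) from `v_{x_i}`
on the upper (resp. lower) path of `x_i` for each non-negated (resp. negated)
literal of `c_j`; the path `v_{c_1}^g - ⋯ - v_{c_m}^g`; and edges from
`v_{c_m}^g` to every `v_{x_i}`. -/
def phiRel {n m : ℕ} (sat : ThreeSat n m) : PhiV n m → PhiV n m → Prop
  | PhiV.vx i, PhiV.mid i' _ k => i = i' ∧ (k : ℕ) = 0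
  | PhiV.mid i s k, PhiV.mid i' s' k' => i = i' ∧ s = s' ∧ (k' : ℕ) = (k : ℕ) + 1
  | PhiV.mid i _ k, PhiV.vxg i' => i = i' ∧ (k : ℕ) = m
  | PhiV.vc j, PhiV.mid i s k => (∃ l, sat.lit j l = (i, s)) ∧ (k : ℕ) = (j : ℕ)
  | PhiV.vcg j, PhiV.vcg j' => (j' : ℕ) = (j : ℕ) + 1
  | PhiV.vcg j, PhiV.vx _ => (j : ℕ) + 1 = m
  | _, _ => False

/-- The graph of the reduced MPP instance `Φ`. -/
def phiGraph {n m : ℕ} (sat : ThreeSat n m) : SimpleGraph (PhiV n m) :=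
  SimpleGraph.fromRel (phiRel sat)

/-- Start configuration of `Φ`: the variable robot `r_{x_i}` (index
`Sum.inl i`) starts at `v_{x_i}`; the clause robot `r_{c_j}` (index
`Sum.inr j`) starts at `v_{c_j}`. -/
def phiStart {n m : ℕ} : Fin n ⊕ Fin m → PhiV n m :=
  Sum.elim PhiV.vx PhiV.vc

/-- Goal configuration of `Φ`: `r_{x_i}` must reach `v_{x_i}^g` and `r_{c_j}`
must reach `v_{c_j}^g`. -/
def phiGoal {n m : ℕ} : Fin n ⊕ Fin m → PhiV n m :=
  Sum.elim PhiV.vxg PhiV.vcg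

end MPPFormal

namespace MPPFormal

/-- A solution of the two-group (interchangeable-robot) version `Φ'` of the
reduced instance: the variable robots form one group with goal set
`{v_{x_1}^g, …, v_{x_n}^g}` and the clause robots form another group with
goal set `{v_{c_1}^g, …, v_{c_m}^g}`.  `g` records the final goal vertex of
each robot: within each group the robots occupy all goal vertices of the
group, i.e. `g` is given by permutations of the two groups' goal sets, and
`p` is an ordinary (collision-free, feasible) solution for the goal
configuration `g`. -/
def TwoGroupSolution {n m : ℕ} (sat : ThreeSat n m)
    (p : Fin n ⊕ Fin m → ℕ → PhiV n m) (g : Fin n ⊕ Fin m → PhiV n m) : Prop :=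
  (∃ (φ : Equiv.Perm (Fin n)) (ψ : Equiv.Perm (Fin m)),
      g = Sum.elim (fun i => PhiV.vxg (φ i)) fun j => PhiV.vcg (ψ j)) ∧
    IsSolution (phiGraph sat) phiStart g p

end MPPFormal

namespace MPPFormal

/-!
Give `v_{c_k}^g` the potential `k`, `v_{x_i}` the potential `m`, the interior vertices of the
`i`-th paths the potentials `m + 1, …, 2m + 1`, `v_{x_i}^g` the potential `2m + 2` and `v_{c_j}`
the potential `m + 2 + j`. Adjacent vertices differ in potential by at most one, so every variable
robot needs at least `m + 2` steps, and the clause robot travelling from `v_{c_j}` to `v_{c_k}^g`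
needs at least `m + 2 + j - k`.

The part of the goal chain below `v_{c_k}^g` can only be entered through `v_{c_k}^g`, so the robot
bound for `v_{c_k}^g` arrives there from `v_{c_{k+1}}^g` and hence no later than the robot bound
for `v_{c_{k+1}}^g`. Starting from `v_{c_1}^g`, this shows that every clause robot, too, needs at
least `m + 2` steps. Either optimality hypothesis therefore bounds every clause arrival time by
`m + 2`, which forces `j ≤ k` for the robot from `v_{c_j}` to `v_{c_k}^g`; and a permutation `σ`
of `Fin m` with `j ≤ σ j` for all `j` is the identity.
-/

lemma arrivalTime_spec {V : Type} {g : V} {q : ℕ → V} (h : ∃ t, q t = g) :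
    q (arrivalTime g q) = g :=
  Nat.sInf_mem h

lemma arrivalTime_le {V : Type} {g : V} {q : ℕ → V} {t : ℕ} (h : q t = g) :
    arrivalTime g q ≤ t :=
  Nat.sInf_le h

lemma arrivalTime_le_makespan {V R : Type} [Fintype R] (xG : R → V) (p : R → ℕ → V) (i : R) :
    arrivalTime (xG i) (p i) ≤ makespan xG p :=
  Finset.le_sup (f := fun i => arrivalTime (xG i) (p i)) (Finset.mem_univ i)

lemma arrivalTime_eq_of_totalTime_eq {V R : Type} [Fintype R] {xG : R → V} {p : R → ℕ → V}
    {c : ℕ} (hge : ∀ i, c ≤ arrivalTime (xG i) (p i))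
    (htot : totalTime xG p = Fintype.card R * c) (i : R) :
    arrivalTime (xG i) (p i) = c := by
  have hsum : ∑ _i : R, c = ∑ i, arrivalTime (xG i) (p i) := by
    rw [Finset.sum_const, Finset.card_univ, smul_eq_mul, ← htot, totalTime]
  exact ((Finset.sum_eq_sum_iff_of_le fun i _ => hge i).1 hsum i (Finset.mem_univ i)).symm

lemma Equiv.Perm.apply_eq_of_forall_le_apply {α M : Type*} [Fintype α] [AddCommMonoid M]
    [PartialOrder M] [IsOrderedCancelAddMonoid M] (σ : Equiv.Perm α) (f : α → M)
    (h : ∀ i, f i ≤ f (σ i)) (i : α) : f (σ i) = f i :=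
  ((Finset.sum_eq_sum_iff_of_le fun i _ => h i).1 (Equiv.sum_comp σ f).symm i
    (Finset.mem_univ i)).symm

section Potential

variable {V : Type} {G : SimpleGraph V} (f : V → ℕ)

lemma potential_le_add_one (hf : ∀ u v, G.Adj u v → f u ≤ f v + 1) {u v : V}
    (h : G.Adj u v ∨ u = v) : f u ≤ f v + 1 := by
  rcases h with h | rfl
  · exact hf _ _ h
  · omega

variable {p : ℕ → V}

lemma potential_start_le_add (hf : ∀ u v, G.Adj u v → f u ≤ f v + 1)
    (hp : ∀ t, G.Adj (p t) (p (t + 1)) ∨ p t = p (t + 1)) (t : ℕ) : f (p 0) ≤ f (p t) + t := by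
  induction t with
  | zero => omega
  | succ t ih => have := potential_le_add_one f hf (hp t); omega

lemma potential_le_start_add (hf : ∀ u v, G.Adj u v → f u ≤ f v + 1)
    (hp : ∀ t, G.Adj (p t) (p (t + 1)) ∨ p t = p (t + 1)) (t : ℕ) : f (p t) ≤ f (p 0) + t := by
  induction t with
  | zero => omega
  | succ t ih =>
    have := potential_le_add_one f hf ((hp t).imp G.adj_symm Eq.symm)
    omega

lemma FeasiblePath.potential_start_le {s g : V} (hf : ∀ u v, G.Adj u v → f u ≤ f v + 1)
    (hp : FeasiblePath G s g p) : f s ≤ f g + arrivalTime g p := by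
  have := potential_start_le_add f hf hp.2.2.2 (arrivalTime g p)
  rwa [hp.1, arrivalTime_spec hp.2.1] at this

lemma FeasiblePath.potential_goal_le {s g : V} (hf : ∀ u v, G.Adj u v → f u ≤ f v + 1)
    (hp : FeasiblePath G s g p) : f g ≤ f s + arrivalTime g p := by
  have := potential_le_start_add f hf hp.2.2.2 (arrivalTime g p)
  rwa [hp.1, arrivalTime_spec hp.2.1] at this

end Potential

section Reduction

variable {n m : ℕ} {sat : ThreeSat n m}

def phiPot : PhiV n m → ℕ
  | .vx _ => m
  | .vxg _ => 2 * m + 2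
  | .mid _ _ k => m + 1 + k
  | .vc j => m + 2 + j
  | .vcg j => j

lemma phiPot_le_add_one_of_rel {u v : PhiV n m} (h : phiRel sat u v) :
    phiPot u ≤ phiPot v + 1 ∧ phiPot v ≤ phiPot u + 1 := by
  cases u <;> cases v <;> simp only [phiRel, phiPot] at h ⊢ <;> omega

lemma phiPot_le_add_one_of_adj (u v : PhiV n m) (h : (phiGraph sat).Adj u v) :
    phiPot u ≤ phiPot v + 1 := by
  rcases (SimpleGraph.fromRel_adj _ _ _).1 h |>.2 with h | h
  · exact (phiPot_le_add_one_of_rel h).1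
  · exact (phiPot_le_add_one_of_rel h).2

lemma eq_vcg_of_phiPot_eq {v : PhiV n m} {k : Fin m} (h : phiPot v = k) : v = .vcg k := by
  cases v <;> simp only [phiPot] at h <;> first | omega | exact congrArg _ (Fin.ext h)

/-- `v_{c_k}^g` is the only vertex of potential `k`, so a path coming from above cannot get below
it before visiting it. -/
lemma lt_phiPot_of_lt_arrivalTime {q : ℕ → PhiV n m} {k : Fin m}
    (hq : ∀ t, (phiGraph sat).Adj (q t) (q (t + 1)) ∨ q t = q (t + 1)) (h0 : (k : ℕ) < phiPot (q 0)) :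
    ∀ t < arrivalTime (.vcg k) q, (k : ℕ) < phiPot (q t) := by
  intro t
  induction t with
  | zero => exact fun _ => h0
  | succ t ih =>
    intro ht
    have hstep := potential_le_add_one phiPot phiPot_le_add_one_of_adj (hq t)
    have hne : q (t + 1) ≠ .vcg k := fun h => (arrivalTime_le h).not_gt ht
    have := ih (by omega)
    by_contra hle
    exact hne (eq_vcg_of_phiPot_eq (by omega))

lemma arrivalTime_vcg_le_of_succ {q q' : ℕ → PhiV n m} {j : Fin m} {s : PhiV n m} {k k' : Fin m}
    (hq : FeasiblePath (phiGraph sat) (.vc j) (.vcg k) q)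
    (hq' : FeasiblePath (phiGraph sat) s (.vcg k') q') (hk : (k' : ℕ) = k + 1)
    (hnc : ¬ Collide q q') :
    arrivalTime (.vcg k) q ≤ arrivalTime (.vcg k') q' := by
  obtain ⟨hq0, hreach, -, hstep⟩ := hq
  have harr := arrivalTime_spec hreach
  obtain ⟨B, hB⟩ : ∃ B, arrivalTime (.vcg k) q = B + 1 := by
    refine Nat.exists_eq_add_one.2 (Nat.pos_of_ne_zero fun h => ?_)
    rw [h, hq0] at harr
    cases harr
  have hbar :=
    lt_phiPot_of_lt_arrivalTime (k := k) hstep (by simp only [hq0, phiPot]; omega) B (by omega)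
  have hdesc := potential_le_add_one phiPot phiPot_le_add_one_of_adj (hstep B)
  rw [← hB, harr] at hdesc
  have hqB : q B = .vcg k' := eq_vcg_of_phiPot_eq (by change phiPot (q B) ≤ k + 1 at hdesc; omega)
  by_contra! hlt
  exact hnc (Or.inl ⟨B, hqB.trans (hq'.2.2.1 B (by omega)).symm⟩)

section TwoGroup

variable {p : Fin n ⊕ Fin m → ℕ → PhiV n m} {φ : Equiv.Perm (Fin n)} {ψ : Equiv.Perm (Fin m)}

lemma clause_feasiblePath
    (hsol : IsSolution (phiGraph sat) phiStart
      (Sum.elim (fun i => PhiV.vxg (φ i)) fun j => PhiV.vcg (ψ j)) p) (j : Fin m) :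
    FeasiblePath (phiGraph sat) (.vc j) (.vcg (ψ j)) (p (.inr j)) :=
  hsol.1 (.inr j)

lemma add_two_le_clause_arrivalTime
    (hsol : IsSolution (phiGraph sat) phiStart
      (Sum.elim (fun i => PhiV.vxg (φ i)) fun j => PhiV.vcg (ψ j)) p) (j : Fin m) :
    m + 2 ≤ arrivalTime (.vcg (ψ j)) (p (.inr j)) := by
  suffices ∀ k : ℕ, ∀ j, (ψ j : ℕ) = k → m + 2 ≤ arrivalTime (.vcg (ψ j)) (p (.inr j)) from
    this _ j rfl
  intro k
  induction k with
  | zero =>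
    intro j hj
    have := (clause_feasiblePath hsol j).potential_start_le phiPot phiPot_le_add_one_of_adj
    simp only [phiPot, hj] at this
    omega
  | succ k ih =>
    intro j hj
    obtain ⟨j₀, hj₀⟩ : ∃ j₀, (ψ j₀ : ℕ) = k := ⟨ψ.symm ⟨k, by omega⟩, by simp⟩
    have hne : j₀ ≠ j := by
      rintro rfl
      omega
    exact (ih j₀ hj₀).trans (arrivalTime_vcg_le_of_succ (clause_feasiblePath hsol j₀)
      (clause_feasiblePath hsol j) (by omega) (hsol.2 (Sum.inr_injective.ne hne)))

lemma add_two_le_arrivalTime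
    (hsol : IsSolution (phiGraph sat) phiStart
      (Sum.elim (fun i => PhiV.vxg (φ i)) fun j => PhiV.vcg (ψ j)) p) (r : Fin n ⊕ Fin m) :
    m + 2 ≤ arrivalTime (Sum.elim (fun i => PhiV.vxg (φ i)) (fun j => PhiV.vcg (ψ j)) r) (p r) := by
  cases r with
  | inl i =>
    have hq : FeasiblePath (phiGraph sat) (.vx i) (.vxg (φ i)) (p (.inl i)) := hsol.1 (.inl i)
    have := hq.potential_goal_le phiPot phiPot_le_add_one_of_adj
    simp only [phiPot] at this
    show m + 2 ≤ arrivalTime (.vxg (φ i)) (p (.inl i))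
    omega
  | inr j => exact add_two_le_clause_arrivalTime hsol j

end TwoGroup

end Reduction

theorem twoGroup_optimal_forces_labeled_goals_general {n m : ℕ}
    (sat : ThreeSat n m) (p : Fin n ⊕ Fin m → ℕ → PhiV n m)
    (g : Fin n ⊕ Fin m → PhiV n m) (hsol : TwoGroupSolution sat p g)
    (hopt : makespan g p = m + 2 ∨ totalTime g p = (n + m) * (m + 2)) :
    ∀ j : Fin m, g (Sum.inr j) = PhiV.vcg j ∧
      arrivalTime (g (Sum.inr j)) (p (Sum.inr j)) = m + 2 := by
  obtain ⟨⟨φ, ψ, rfl⟩, hsol⟩ := hsol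
  have hle : ∀ j, arrivalTime (.vcg (ψ j)) (p (.inr j)) ≤ m + 2 := by
    intro j
    rcases hopt with hmax | htot
    · exact hmax ▸ arrivalTime_le_makespan
        (Sum.elim (fun i => PhiV.vxg (φ i)) fun j => PhiV.vcg (ψ j)) p (.inr j)
    · refine (arrivalTime_eq_of_totalTime_eq (add_two_le_arrivalTime hsol) ?_ (.inr j)).le
      rwa [Fintype.card_sum, Fintype.card_fin, Fintype.card_fin]
  have hψ : ψ = 1 := by
    refine Equiv.ext fun j => Fin.ext <|
      Equiv.Perm.apply_eq_of_forall_le_apply ψ Fin.val (fun j => ?_) j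
    have hstart := (clause_feasiblePath hsol j).potential_start_le phiPot phiPot_le_add_one_of_adj
    simp only [phiPot] at hstart
    have := hle j
    omega
  subst hψ
  exact fun j => ⟨rfl, le_antisymm (hle j) (add_two_le_clause_arrivalTime hsol j)⟩

/-- In any solution of the two-group instance `Φ'` with makespan `m + 2`, and
likewise in any solution of `Φ'` with total arrival time `(n + m)(m + 2)`,
the clause robot starting at `v_{c_j}` ends at the goal vertex `v_{c_j}^g`
and takes exactly `m + 2` time steps to reach it, for every `1 ≤ j ≤ m`:
minimum-time solutions of the two-group instance induce the same
robot-to-goal correspondence as the fully labeled instance. -/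
theorem twoGroup_optimal_forces_labeled_goals {n m : ℕ} (hm : 0 < m)
    (sat : ThreeSat n m) (p : Fin n ⊕ Fin m → ℕ → PhiV n m)
    (g : Fin n ⊕ Fin m → PhiV n m) (hsol : TwoGroupSolution sat p g)
    (hopt : makespan g p = m + 2 ∨ totalTime g p = (n + m) * (m + 2)) :
    ∀ j : Fin m, g (Sum.inr j) = PhiV.vcg j ∧
      arrivalTime (g (Sum.inr j)) (p (Sum.inr j)) = m + 2 :=
  twoGroup_optimal_forces_labeled_goals_general sat p g hsol hopt

end MPPFormal
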